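/- Let X₁, …, X_n be identically distributed random variables with finite fourth moments and let I be uniform on {1,…,n}, independent of X = (X₁,…,X_n). Then E((Var(X_I ∣ X))²) ≤ 40 μ₄(X₁), where μ₄(X₁) = E((X₁ − EX₁)⁴). -/

import Mathlib

open MeasureTheory ProbabilityTheory Finset

theorem expected_sq_empirical_variance_le
    {Ω : Type*} [MeasurableSpace Ω] (μ : Measure Ω) [IsProbabilityMeasure μ]
    (n : ℕ) (hn : 1 ≤ n) (X : Fin n → Ω → ℝ)
    (hXm : ∀ i, Measurable (X i))
    (hid : ∀ i j, IdentDistrib (X i) (X j) μ μ)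
    (hL4 : ∀ i, MemLp (X i) 4 μ)
    (I : Ω → Fin n) (hIm : Measurable I)
    (hIunif : ∀ i, μ {ω | I ω = i} = (n : ENNReal)⁻¹)
    (hIindep : IndepFun I (fun ω i => X i ω) μ) :
    ∫ ω, ((1 / n : ℝ) * ∑ i, (X i ω - (1 / n : ℝ) * ∑ j, X j ω) ^ 2) ^ 2 ∂μ
      ≤ 40 * ∫ ω, (X ⟨0, hn⟩ ω - ∫ ω', X ⟨0, hn⟩ ω' ∂μ) ^ 4 ∂μ := by
  set m : ℝ := ∫ ω', X ⟨0, hn⟩ ω' ∂μ with hm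
  have hnpos : (0:ℝ) < n := by exact_mod_cast hn
  -- pointwise bound
  have key : ∀ ω, ((1 / n : ℝ) * ∑ i, (X i ω - (1 / n : ℝ) * ∑ j, X j ω) ^ 2) ^ 2
      ≤ (1 / n : ℝ) * ∑ i, (X i ω - m) ^ 4 := by
    intro ω
    set a : Fin n → ℝ := fun i => X i ω with ha
    set c : ℝ := (1 / n : ℝ) * ∑ j, a j with hc
    have hsum : ∑ i, (a i - c) = 0 := by
      rw [Finset.sum_sub_distrib, Finset.sum_const, Finset.card_univ, Fintype.card_fin]
      rw [hc]
      field_simp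
      rw [nsmul_eq_mul, mul_div_assoc', mul_div_cancel_left₀ _ hnpos.ne', sub_self]
    have h1 : ∑ i, (a i - c) ^ 2 ≤ ∑ i, (a i - m) ^ 2 := by
      have expand : ∑ i, (a i - m) ^ 2
          = ∑ i, (a i - c) ^ 2 + (2 * (c - m)) * ∑ i, (a i - c) + (n:ℝ) * (c - m) ^ 2 := by
        rw [Finset.mul_sum, ← Finset.sum_add_distrib]
        have : (n:ℝ) * (c - m) ^ 2 = ∑ _i : Fin n, (c - m) ^ 2 := by
          rw [Finset.sum_const, Finset.card_univ, Fintype.card_fin, nsmul_eq_mul]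
        rw [this, ← Finset.sum_add_distrib]
        exact Finset.sum_congr rfl fun i _ => by ring
      have hnn : (0:ℝ) ≤ (n:ℝ) * (c - m) ^ 2 := by positivity
      rw [expand, hsum]
      nlinarith
    have h2 : (∑ i, (a i - m) ^ 2) ^ 2 ≤ (n:ℝ) * ∑ i, (a i - m) ^ 4 := by
      have := sq_sum_le_card_mul_sum_sq (s := (Finset.univ : Finset (Fin n)))
        (f := fun i => (a i - m) ^ 2)
      simpa [Finset.card_univ, Fintype.card_fin, ← pow_mul] using this
    have hnn1 : (0:ℝ) ≤ ∑ i, (a i - c) ^ 2 := Finset.sum_nonneg fun i _ => sq_nonneg _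
    have step : ((1 / n : ℝ) * ∑ i, (a i - c) ^ 2) ^ 2
        ≤ ((1 / n : ℝ) * ∑ i, (a i - m) ^ 2) ^ 2 := by
      apply pow_le_pow_left₀ (by positivity)
      exact mul_le_mul_of_nonneg_left h1 (by positivity)
    calc ((1 / n : ℝ) * ∑ i, (a i - c) ^ 2) ^ 2
        ≤ ((1 / n : ℝ) * ∑ i, (a i - m) ^ 2) ^ 2 := step
      _ = (1 / n : ℝ)^2 * (∑ i, (a i - m) ^ 2) ^ 2 := by ring
      _ ≤ (1 / n : ℝ)^2 * ((n:ℝ) * ∑ i, (a i - m) ^ 4) :=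
          mul_le_mul_of_nonneg_left h2 (by positivity)
      _ = (1 / n : ℝ) * ∑ i, (a i - m) ^ 4 := by field_simp
  -- integrability of the bound
  have hint4 : ∀ i : Fin n, Integrable (fun ω => (X i ω - m) ^ 4) μ := by
    intro i
    have hmem : MemLp (fun ω => X i ω - m) 4 μ := (hL4 i).sub (memLp_const m)
    have h := hmem.integrable_norm_rpow (by norm_num) (by norm_num)
    have e : ∀ x : ℝ, ‖x‖ ^ ((4:ENNReal).toReal) = x ^ 4 := by
      intro x
      rw [show ((4:ENNReal)).toReal = ((4:ℕ):ℝ) by norm_num, Real.rpow_natCast,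
        Real.norm_eq_abs, pow_abs, abs_of_nonneg (by positivity)]
    exact h.congr (Filter.Eventually.of_forall fun ω => e _)
  have hint : Integrable (fun ω => (1 / n : ℝ) * ∑ i, (X i ω - m) ^ 4) μ :=
    (integrable_finset_sum _ fun i _ => hint4 i).const_mul _
  have hmono : ∫ ω, ((1 / n : ℝ) * ∑ i, (X i ω - (1 / n : ℝ) * ∑ j, X j ω) ^ 2) ^ 2 ∂μ
      ≤ ∫ ω, (1 / n : ℝ) * ∑ i, (X i ω - m) ^ 4 ∂μ := by
    apply integral_mono_of_nonneg
    · exact Filter.Eventually.of_forall fun ω => sq_nonneg _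
    · exact hint
    · exact Filter.Eventually.of_forall key
  have heq : ∀ i : Fin n, ∫ ω, (X i ω - m) ^ 4 ∂μ = ∫ ω, (X ⟨0, hn⟩ ω - m) ^ 4 ∂μ := by
    intro i
    have hu : Measurable (fun x : ℝ => (x - m) ^ 4) := by measurability
    exact ((hid i ⟨0, hn⟩).comp hu).integral_eq
  have hcomp : ∫ ω, (1 / n : ℝ) * ∑ i, (X i ω - m) ^ 4 ∂μ
      = ∫ ω, (X ⟨0, hn⟩ ω - m) ^ 4 ∂μ := by
    rw [integral_const_mul, integral_finset_sum _ fun i _ => hint4 i]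
    rw [Finset.sum_congr rfl fun i _ => heq i, Finset.sum_const, Finset.card_univ,
      Fintype.card_fin, nsmul_eq_mul]
    field_simp
  have hμ4 : 0 ≤ ∫ ω, (X ⟨0, hn⟩ ω - m) ^ 4 ∂μ :=
    integral_nonneg fun ω => by positivity
  calc ∫ ω, ((1 / n : ℝ) * ∑ i, (X i ω - (1 / n : ℝ) * ∑ j, X j ω) ^ 2) ^ 2 ∂μ
      ≤ ∫ ω, (1 / n : ℝ) * ∑ i, (X i ω - m) ^ 4 ∂μ := hmono
    _ = ∫ ω, (X ⟨0, hn⟩ ω - m) ^ 4 ∂μ := hcomp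
    _ ≤ 40 * ∫ ω, (X ⟨0, hn⟩ ω - m) ^ 4 ∂μ := by linarith
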